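/- Fix κ ≥ 0 and let A ∈ C²(ℝ, M²) be a solution of the initial value problem Ä + κA = Λ(A,Ȧ)·cof A with data in D such that the function t ↦ |A(t)| is nonconstant and T-periodic for some T > 0; set Xᵢ = Xᵢ(A(0),Ȧ(0)). Define ω₁ = (1/T)∫₀ᵀ X₃/(½|A(t)|²+1) dt, and ω₂ = 0 if X₂ = 0 while ω₂ = (1/T)∫₀ᵀ X₂/(½|A(t)|²−1) dt if X₂ ≠ 0. Then there is a 2T-periodic function Â : ℝ → M² such that A(t) = U(½(ω₁+ω₂)t)·Â(t)·U(½(ω₁−ω₂)t) for all t ∈ ℝ; moreover Â is T-periodic if A(t) ∉ SO(2,ℝ) for all t ∈ ℝ. -/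

import Mathlib

open Matrix

noncomputable section

/-- `M²`: the space of 2×2 real matrices. -/
abbrev M2 : Type := Matrix (Fin 2) (Fin 2) ℝ

/-- Frobenius inner product `⟨A,B⟩ = tr(AᵀB)`. -/
def mip (A B : M2) : ℝ := (Aᵀ * B).trace

/-- Frobenius norm `|A| = ⟨A,A⟩^{1/2}`. -/
def fnorm (A : M2) : ℝ := Real.sqrt (mip A A)

/-- The matrix Z = [[0,−1],[1,0]]. -/
def Zm : M2 := !![0, -1; 1, 0]

/-- The matrix K = [[1,0],[0,−1]]. -/
def Km : M2 := !![1, 0; 0, -1]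

/-- The matrix M = [[0,1],[1,0]]. -/
def Mm : M2 := !![0, 1; 1, 0]

/-- Cofactor: cof [[a,b],[c,d]] = [[d,−c],[−b,a]]. -/
def cofm (A : M2) : M2 := !![A 1 1, -(A 1 0); -(A 0 1), A 0 0]

/-- Membership in SO(2,ℝ). -/
def isSO (U : M2) : Prop := U.det = 1 ∧ U⁻¹ = Uᵀ

/-- The rotation U(θ) = cos θ·I + sin θ·Z. -/
def Um (θ : ℝ) : M2 := Real.cos θ • (1 : M2) + Real.sin θ • Zm

/-- Invariant X₁(A,B) = ½|B|² + (κ/2)|A|². -/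
def X1 (κ : ℝ) (A B : M2) : ℝ := (1/2) * mip B B + (κ/2) * mip A A

/-- Invariant X₂(A,B) = ½⟨ZA − AZ, B⟩. -/
def X2 (A B : M2) : ℝ := (1/2) * mip (Zm * A - A * Zm) B

/-- Invariant X₃(A,B) = ½⟨ZA + AZ, B⟩. -/
def X3 (A B : M2) : ℝ := (1/2) * mip (Zm * A + A * Zm) B

/-- Lagrange multiplier Λ(A,B) = 2(κ − det B)/|A|². -/
def Lam (κ : ℝ) (A B : M2) : ℝ := 2 * (κ - B.det) / (mip A A)

attribute [local instance] Matrix.normedAddCommGroup Matrix.normedSpace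

/-!
In the complex coordinates `z₁ = conf A`, `z₂ = aconf A` (the parts of `A` commuting and
anticommuting with `Z`) one has `det A = |z₁|² - |z₂|²` and `|A|² = 2 (|z₁|² + |z₂|²)`, and the
equation splits into `z̈₁ = (Λ - κ) z₁`, `z̈₂ = -(Λ + κ) z₂` with real coefficients. Hence the
angular momenta `Im (z̄ᵢ żᵢ)`, which are `X₃ / 2` and `X₂ / 2`, are conserved. The constraint set
`D` is invariant, so `|z₁|²` and `|z₂|²` are affine in `|A|²` and `T`-periodic, and
`(κ - det Ȧ) |A|²` is conserved, so `Λ` is `T`-periodic too. A nonvanishing curve with periodic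
modulus and angular momentum `L` turns by the angle `∫₀ᵀ L / |z|²` over a period: this rotates
`z₁` by `ω₁ T`, and `z₂` by `ω₂ T` when `X₂ ≠ 0`. When `X₂ = 0`, `z₂` moves on a real line,
solving a linear equation with `T`-periodic coefficient and `T`-periodic `z₂²`, so
`z₂ (t + T) = ± z₂ t`, with `+` if `z₂` never vanishes, i.e. if `A` avoids `SO(2)`. Finally
`U(a) X U(b)` rotates `z₁` by `a + b` and `z₂` by `a - b`.
-/

open Set Filter Topology Function Complex ComplexConjugate
open scoped RealInnerProductSpace

theorem eq_of_forall_eventuallyEq {X : Type*} [TopologicalSpace X] [T2Space X] {f g : ℝ → X}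
    (hf : Continuous f) (hg : Continuous g) (hloc : ∀ t, f t = g t → f =ᶠ[𝓝 t] g)
    {t₀ : ℝ} (h₀ : f t₀ = g t₀) : f = g := by
  have hclopen : IsClopen {t | f t = g t} :=
    ⟨isClosed_eq hf hg, isOpen_iff_mem_nhds.2 hloc⟩
  funext t
  exact (hclopen.eq_univ ⟨t₀, h₀⟩).symm.subset (mem_univ t)

section LinearODE

variable {E : Type*} [NormedAddCommGroup E] [NormedSpace ℝ E]

theorem eventuallyEq_zero_of_hasDerivAt_clm_apply {L : ℝ → E →L[ℝ] E} {f : ℝ → E} {t₀ : ℝ}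
    (hL : ContinuousAt L t₀) (hf : ∀ᶠ t in 𝓝 t₀, HasDerivAt f (L t (f t)) t) (h₀ : f t₀ = 0) :
    f =ᶠ[𝓝 t₀] 0 := by
  have hK : ∀ᶠ t in 𝓝 t₀, ‖L t‖₊ < ‖L t₀‖₊ + 1 :=
    hL.nnnorm.eventually (gt_mem_nhds (lt_add_one _))
  refine ODE_solution_unique_of_eventually (v := fun t x => L t x) (s := fun _ => univ)
    (hK.mono fun t ht => ((L t).lipschitz.weaken ht.le).lipschitzOnWith)
    (hf.mono fun t ht => ⟨ht, mem_univ _⟩)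
    (Eventually.of_forall fun t => ⟨by simp, mem_univ _⟩) h₀

theorem eq_zero_of_hasDerivAt_clm_apply {L : ℝ → E →L[ℝ] E} {f : ℝ → E} (hL : Continuous L)
    (hf : ∀ t, HasDerivAt f (L t (f t)) t) {t₀ : ℝ} (h₀ : f t₀ = 0) : f = 0 :=
  eq_of_forall_eventuallyEq (continuous_iff_continuousAt.2 fun t => (hf t).continuousAt)
    continuous_const
    (fun _ ht => eventuallyEq_zero_of_hasDerivAt_clm_apply hL.continuousAt
      (Eventually.of_forall hf) ht) h₀

theorem eq_zero_of_hasDerivAt_of_hasDerivAt_smul {u v : ℝ → E} {c : ℝ → ℝ} (hc : Continuous c)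
    (hu : ∀ t, HasDerivAt u (v t) t) (hv : ∀ t, HasDerivAt v (c t • u t) t) {t₀ : ℝ}
    (hu₀ : u t₀ = 0) (hv₀ : v t₀ = 0) : u = 0 := by
  let L : ℝ → (E × E) →L[ℝ] (E × E) := fun t =>
    (ContinuousLinearMap.snd ℝ E E).prod 0 + c t • (0 : E × E →L[ℝ] E).prod (.fst ℝ E E)
  have h := eq_zero_of_hasDerivAt_clm_apply (f := fun t => (u t, v t)) (L := L)
    (continuous_const.add (hc.smul continuous_const))
    (fun t => by simpa [L] using (hu t).prodMk (hv t)) (t₀ := t₀) (by simp [hu₀, hv₀])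
  funext t
  exact congrArg Prod.fst (congrFun h t)

end LinearODE

theorem HasDerivAt.re {f : ℝ → ℂ} {f' : ℂ} {t : ℝ} (h : HasDerivAt f f' t) :
    HasDerivAt (fun s => (f s).re) f'.re t :=
  reCLM.hasFDerivAt.comp_hasDerivAt t h

theorem HasDerivAt.im {f : ℝ → ℂ} {f' : ℂ} {t : ℝ} (h : HasDerivAt f f' t) :
    HasDerivAt (fun s => (f s).im) f'.im t :=
  imCLM.hasFDerivAt.comp_hasDerivAt t h

theorem eq_exp_sub_mul_of_hasDerivAt_eq_mul {z ψ ψ' : ℝ → ℂ}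
    (hz : ∀ t, HasDerivAt z (ψ' t * z t) t) (hψ : ∀ t, HasDerivAt ψ (ψ' t) t) (s t : ℝ) :
    z t = exp (ψ t - ψ s) * z s := by
  have hG : ∀ r, HasDerivAt (fun r => exp (-ψ r) * z r) 0 r := fun r => by
    refine (((hψ r).neg.cexp).mul (hz r)).congr_deriv ?_
    ring
  have hconst := is_const_of_deriv_eq_zero (fun r => (hG r).differentiableAt)
    (fun r => (hG r).deriv) t s
  calc z t = exp (ψ t) * (exp (-ψ t) * z t) := by rw [← mul_assoc, ← exp_add]; simp
    _ = exp (ψ t) * (exp (-ψ s) * z s) := by rw [hconst]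
    _ = exp (ψ t - ψ s) * z s := by rw [← mul_assoc, ← exp_add, sub_eq_add_neg]

theorem apply_add_eq_exp_integral_mul {z z' : ℝ → ℂ} {L T : ℝ}
    (hz : ∀ t, HasDerivAt z (z' t) t) (hne : ∀ t, z t ≠ 0)
    (hper : Periodic (fun t => ‖z t‖ ^ 2) T) (hL : ∀ t, (conj (z t) * z' t).im = L)
    (t : ℝ) : z (t + T) = exp (↑(∫ s in (0 : ℝ)..T, L / ‖z s‖ ^ 2) * I) * z t := by
  set N := fun t => ‖z t‖ ^ 2
  have hN : ∀ t, N t ≠ 0 := fun t => pow_ne_zero 2 (norm_ne_zero_iff.2 (hne t))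
  have hNc : Continuous N :=
    (continuous_iff_continuousAt.2 fun t => (hz t).continuousAt).norm.pow 2
  have hdN : ∀ t, HasDerivAt N (2 * (conj (z t) * z' t).re) t := fun t => by
    simpa [Complex.inner, mul_comm] using (hz t).norm_sq
  set θ := fun t => ∫ s in (0 : ℝ)..t, L / N s
  have hθ : ∀ t, HasDerivAt θ (L / N t) t := fun t =>
    ((continuous_const.div hNc hN).integral_hasStrictDerivAt 0 t).hasDerivAt
  -- `ψ' = z' / z`, with real part `(log |z|)'` and imaginary part `θ' = L / |z|²`
  set ψ : ℝ → ℂ := fun t => ((Real.log (N t) / 2 : ℝ) : ℂ) + (θ t : ℂ) * I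
  have hψ : ∀ t, HasDerivAt ψ (conj (z t) * z' t / N t) t := fun t => by
    have h : HasDerivAt ψ _ t :=
      ((((Real.hasDerivAt_log (hN t)).comp t (hdN t)).div_const 2).ofReal_comp).add
        ((hθ t).ofReal_comp.mul_const I)
    refine h.congr_deriv (Complex.ext ?_ ?_)
    · simp [div_ofReal_re]
      field_simp
    · simp [hL, div_ofReal_im]
  have hz' : ∀ t, HasDerivAt z (conj (z t) * z' t / N t * z t) t := fun t => by
    have hzz : conj (z t) * z t = N t := by simp [N, conj_mul']
    convert hz t using 1
    rw [div_mul_eq_mul_div, mul_right_comm, hzz, mul_div_cancel_left₀ _ (by exact_mod_cast hN t)]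
  have hθT : θ (t + T) - θ t = ∫ s in (0 : ℝ)..T, L / N s := by
    have hint : ∀ a b, IntervalIntegrable (fun s => L / N s) MeasureTheory.volume a b :=
      fun a b => (continuous_const.div hNc hN).intervalIntegrable a b
    rw [intervalIntegral.integral_interval_sub_left (hint _ _) (hint _ _)]
    simpa using (hper.comp (fun x => L / x)).intervalIntegral_add_eq t 0
  rw [eq_exp_sub_mul_of_hasDerivAt_eq_mul hz' hψ t (t + T)]
  congr 2
  simp only [ψ, show N (t + T) = N t from hper t]
  rw [← hθT]; push_cast; ring

theorem exists_sq_eq_one_apply_add_eq_mul {y y' c : ℝ → ℝ} {T : ℝ} (hc : Continuous c)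
    (hcT : Periodic c T) (hy : ∀ t, HasDerivAt y (y' t) t)
    (hy' : ∀ t, HasDerivAt y' (c t * y t) t) (hsq : Periodic (fun t => y t ^ 2) T) :
    ∃ σ : ℝ, σ ^ 2 = 1 ∧ ∀ t, y (t + T) = σ * y t := by
  by_cases h0 : ∀ t, y t = 0
  · exact ⟨1, one_pow 2, fun t => by simp [h0]⟩
  push Not at h0
  obtain ⟨t₁, ht₁⟩ := h0
  set σ := y (t₁ + T) / y t₁
  have hσy : y (t₁ + T) = σ * y t₁ := (div_mul_cancel₀ _ ht₁).symm
  have hσ : σ ^ 2 = 1 := by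
    have h : y (t₁ + T) ^ 2 = y t₁ ^ 2 := hsq t₁
    rw [hσy, mul_pow] at h
    exact mul_right_cancel₀ (pow_ne_zero 2 ht₁) (h.trans (one_mul _).symm)
  have hσy' : y' (t₁ + T) = σ * y' t₁ := by
    have hshift : HasDerivAt (fun t => y (t + T) ^ 2) (2 * y (t₁ + T) * y' (t₁ + T)) t₁ :=
      (((hy (t₁ + T)).comp_add_const t₁ T).fun_pow 2).congr_deriv (by norm_num)
    have hsame : HasDerivAt (fun t => y t ^ 2) (2 * y t₁ * y' t₁) t₁ :=
      ((hy t₁).fun_pow 2).congr_deriv (by norm_num)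
    rw [show (fun t => y (t + T) ^ 2) = fun t => y t ^ 2 from funext hsq] at hshift
    have h := hshift.unique hsame
    rw [hσy] at h
    have h' : σ * y' (t₁ + T) = y' t₁ :=
      mul_left_cancel₀ ht₁ (by linear_combination h / 2)
    linear_combination σ * h' - y' (t₁ + T) * hσ
  have hshift := eq_zero_of_hasDerivAt_of_hasDerivAt_smul
    (u := fun t => y (t + T) - σ * y t) (v := fun t => y' (t + T) - σ * y' t) hc
    (fun t => ((hy (t + T)).comp_add_const t T).sub ((hy t).const_mul σ))
    (fun t => by
      refine (((hy' (t + T)).comp_add_const t T).sub ((hy' t).const_mul σ)).congr_deriv ?_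
      rw [hcT t, smul_eq_mul]
      ring)
    (t₀ := t₁) (by simp [hσy]) (by simp [hσy'])
  exact ⟨σ, hσ, fun t => sub_eq_zero.1 (congrFun hshift t)⟩

theorem eq_one_of_apply_add_eq_mul {y : ℝ → ℝ} (hy : Continuous y) (hne : ∀ t, y t ≠ 0)
    {σ T : ℝ} (hσ : σ ^ 2 = 1) (h : ∀ t, y (t + T) = σ * y t) : σ = 1 := by
  refine (sq_eq_one_iff.1 hσ).resolve_right fun hσ' => ?_
  have h0 : (0 : ℝ) ∈ uIcc (y 0) (y (0 + T)) := by
    rw [h, hσ', neg_one_mul, mem_uIcc]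
    rcases le_total 0 (y 0) with h | h
    · exact Or.inr ⟨by linarith, h⟩
    · exact Or.inl ⟨h, by linarith⟩
  obtain ⟨s, -, hs⟩ := intermediate_value_uIcc hy.continuousOn h0
  exact hne s hs

theorem im_conj_mul_eq_of_hasDerivAt_smul {z w : ℝ → ℂ} {c : ℝ → ℝ}
    (hz : ∀ t, HasDerivAt z (w t) t) (hw : ∀ t, HasDerivAt w (c t • z t) t) (s t : ℝ) :
    (conj (z t) * w t).im = (conj (z s) * w s).im := by
  have h : ∀ t, HasDerivAt (fun t => (conj (z t) * w t).im) 0 t := fun t => by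
    refine ((hz t).star.mul (hw t)).im.congr_deriv ?_
    simp [real_smul, mul_im]
    ring
  exact is_const_of_deriv_eq_zero (fun t => (h t).differentiableAt) (fun t => (h t).deriv) t s

theorem periodic_of_im_conj_mul_eq_zero {z w : ℝ → ℂ} {c : ℝ → ℝ} {T : ℝ} (hc : Continuous c)
    (hcT : Periodic c T) (hz : ∀ t, HasDerivAt z (w t) t)
    (hw : ∀ t, HasDerivAt w (c t • z t) t) (him : ∀ t, (conj (z t) * w t).im = 0)
    (hper : Periodic (fun t => ‖z t‖ ^ 2) T) :
    Periodic z (2 * T) ∧ ((∀ t, z t ≠ 0) → Periodic z T) := by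
  by_cases h0 : ∀ t, z t = 0
  · exact ⟨fun t => by simp [h0], fun hne => absurd (h0 0) (hne 0)⟩
  push Not at h0
  obtain ⟨t₁, hζ⟩ := h0
  set ζ := z t₁
  have hζ' : conj ζ ≠ 0 := by simpa using hζ
  -- the motion stays on the real line through `ζ`
  have hline : (fun t => (conj ζ * z t).im) = 0 :=
    eq_zero_of_hasDerivAt_of_hasDerivAt_smul (v := fun t => (conj ζ * w t).im) hc
      (fun t => ((hz t).const_mul _).im)
      (fun t => ((hw t).const_mul _).im.congr_deriv (by simp [real_smul, mul_im]; ring))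
      (t₀ := t₁) (by simp [ζ, mul_comm]) (him t₁)
  set y := fun t => (conj ζ * z t).re
  have hy : ∀ t, (y t : ℂ) = conj ζ * z t := fun t =>
    Complex.ext rfl (by simpa using (congrFun hline t).symm)
  have hysq : ∀ t, y t ^ 2 = ‖ζ‖ ^ 2 * ‖z t‖ ^ 2 := fun t => by
    have h := congrArg (‖·‖ ^ 2) (hy t)
    simp only [norm_real, Real.norm_eq_abs, sq_abs, norm_mul, RCLike.norm_conj, mul_pow] at h
    exact h
  obtain ⟨σ, hσ, hσy⟩ := exists_sq_eq_one_apply_add_eq_mul (y := y) hc hcT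
    (fun t => ((hz t).const_mul (conj ζ)).re)
    (fun t => ((hw t).const_mul (conj ζ)).re.congr_deriv (by simp [real_smul, y]; ring))
    (fun t => by simp only [hysq, hper t])
  have hshift : ∀ t, z (t + T) = σ * z t := fun t =>
    mul_left_cancel₀ hζ' (by rw [← hy, hσy, ofReal_mul, hy]; ring)
  refine ⟨fun t => ?_, fun hne => ?_⟩
  · rw [two_mul, ← add_assoc, hshift, hshift, ← mul_assoc, ← ofReal_mul, ← sq, hσ, ofReal_one,
      one_mul]
  · have hyne : ∀ t, y t ≠ 0 := fun t h => hne t (by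
      simpa [hζ'] using (hy t).symm.trans (congrArg ofReal h))
    have hyc : Continuous y :=
      continuous_iff_continuousAt.2 fun t => (((hz t).const_mul (conj ζ)).re).continuousAt
    intro t
    rw [hshift, eq_one_of_apply_add_eq_mul hyc hyne hσ hσy, ofReal_one, one_mul]

theorem apply_add_two_mul_eq_exp_mul {z : ℝ → ℂ} {ω T : ℝ}
    (h : ∀ t, z (t + T) = exp (↑(ω * T) * I) * z t) (t : ℝ) :
    z (t + 2 * T) = exp (↑(ω * (2 * T)) * I) * z t := by
  rw [two_mul, ← add_assoc, h, h, ← mul_assoc, ← exp_add]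
  congr 2
  push_cast
  ring

/-- `A = (conf A).re • 1 + (conf A).im • Zm + (aconf A).re • Km + (aconf A).im • Mm`: `conf` is the
part of `A` commuting with `Zm`, `aconf` the part anticommuting with it. -/
def conf : M2 →L[ℝ] ℂ := LinearMap.toContinuousLinearMap
  { toFun := fun A => ⟨(A 0 0 + A 1 1) / 2, (A 1 0 - A 0 1) / 2⟩
    map_add' := fun A B => by apply Complex.ext <;> simp <;> ring
    map_smul' := fun r A => by apply Complex.ext <;> simp <;> ring }

def aconf : M2 →L[ℝ] ℂ := LinearMap.toContinuousLinearMap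
  { toFun := fun A => ⟨(A 0 0 - A 1 1) / 2, (A 0 1 + A 1 0) / 2⟩
    map_add' := fun A B => by apply Complex.ext <;> simp <;> ring
    map_smul' := fun r A => by apply Complex.ext <;> simp <;> ring }

@[simp] theorem conf_re (A : M2) : (conf A).re = (A 0 0 + A 1 1) / 2 := rfl
@[simp] theorem conf_im (A : M2) : (conf A).im = (A 1 0 - A 0 1) / 2 := rfl
@[simp] theorem aconf_re (A : M2) : (aconf A).re = (A 0 0 - A 1 1) / 2 := rfl
@[simp] theorem aconf_im (A : M2) : (aconf A).im = (A 0 1 + A 1 0) / 2 := rfl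

theorem eq_of_conf_eq_of_aconf_eq {A B : M2} (h₁ : conf A = conf B) (h₂ : aconf A = aconf B) :
    A = B := by
  have := congrArg re h₁; have := congrArg im h₁; have := congrArg re h₂; have := congrArg im h₂
  simp only [conf_re, conf_im, aconf_re, aconf_im] at *
  ext i j; fin_cases i <;> fin_cases j <;> simp <;> linarith

theorem mip_eq_inner (A B : M2) :
    mip A B = 2 * (⟪conf A, conf B⟫ + ⟪aconf A, aconf B⟫) := by
  simp [mip, Matrix.trace_fin_two, Matrix.mul_apply, Fin.sum_univ_two, Complex.inner, mul_re]
  ring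

theorem mip_self_eq_norm_sq (A : M2) : mip A A = 2 * (‖conf A‖ ^ 2 + ‖aconf A‖ ^ 2) := by
  rw [mip_eq_inner, real_inner_self_eq_norm_sq, real_inner_self_eq_norm_sq]

theorem det_eq_norm_sq_sub_norm_sq (A : M2) : A.det = ‖conf A‖ ^ 2 - ‖aconf A‖ ^ 2 := by
  simp [Matrix.det_fin_two, ← normSq_eq_norm_sq, normSq_apply]
  ring

theorem conf_cofm (A : M2) : conf (cofm A) = conf A := by
  apply Complex.ext <;> simp [cofm] <;> ring

theorem aconf_cofm (A : M2) : aconf (cofm A) = -aconf A := by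
  apply Complex.ext <;> simp [cofm] <;> ring

theorem X3_eq_im (A B : M2) : X3 A B = 2 * (conj (conf A) * conf B).im := by
  rw [Matrix.eta_fin_two A]
  simp [X3, mip, Zm, Matrix.trace_fin_two, Matrix.mul_apply, Fin.sum_univ_two, mul_im]
  ring

theorem X2_eq_im (A B : M2) : X2 A B = 2 * (conj (aconf A) * aconf B).im := by
  rw [Matrix.eta_fin_two A]
  simp [X2, mip, Zm, Matrix.trace_fin_two, Matrix.mul_apply, Fin.sum_univ_two, mul_im]
  ring

theorem Um_eq (θ : ℝ) : Um θ = !![Real.cos θ, -Real.sin θ; Real.sin θ, Real.cos θ] := by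
  ext i j; fin_cases i <;> fin_cases j <;> simp [Um, Zm]

theorem conf_Um_mul_mul_Um (a b : ℝ) (A : M2) :
    conf (Um a * A * Um b) = exp (↑(a + b) * I) * conf A := by
  rw [Matrix.eta_fin_two A, exp_mul_I, ← ofReal_cos, ← ofReal_sin]
  simp only [Um_eq, Matrix.mul_fin_two]
  apply Complex.ext <;>
    simp [-ofReal_cos, -ofReal_sin, Real.cos_add, Real.sin_add, mul_re, mul_im] <;> ring

theorem aconf_Um_mul_mul_Um (a b : ℝ) (A : M2) :
    aconf (Um a * A * Um b) = exp (↑(a - b) * I) * aconf A := by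
  rw [Matrix.eta_fin_two A, exp_mul_I, ← ofReal_cos, ← ofReal_sin]
  simp only [Um_eq, Matrix.mul_fin_two]
  apply Complex.ext <;>
    simp [-ofReal_cos, -ofReal_sin, Real.cos_sub, Real.sin_sub, mul_re, mul_im] <;> ring

theorem isSO_of_det_eq_one_of_aconf_eq_zero {A : M2} (hdet : A.det = 1) (h : aconf A = 0) :
    isSO A := by
  have h₁ : A 1 1 = A 0 0 := by linarith [show (aconf A).re = 0 by simp [h], aconf_re A]
  have h₂ : A 0 1 = -A 1 0 := by linarith [show (aconf A).im = 0 by simp [h], aconf_im A]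
  refine ⟨hdet, Matrix.inv_eq_right_inv ?_⟩
  rw [Matrix.det_fin_two, h₁, h₂] at hdet
  ext i j; fin_cases i <;> fin_cases j <;>
    simp [Matrix.mul_apply, Fin.sum_univ_two, h₁, h₂] <;> linarith

theorem mip_cofm_eq_inner (A B : M2) :
    mip B (cofm A) = 2 * (⟪conf A, conf B⟫ - ⟪aconf A, aconf B⟫) := by
  rw [mip_eq_inner, conf_cofm, aconf_cofm, inner_neg_right, real_inner_comm (conf A),
    real_inner_comm (aconf A)]
  ring

theorem lam_mul_mip {κ : ℝ} {A : M2} (B : M2) (hA : mip A A ≠ 0) :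
    Lam κ A B * mip A A = 2 * (κ - B.det) :=
  div_mul_cancel₀ _ hA

theorem continuous_mip_self : Continuous fun A : M2 => mip A A := by
  unfold mip; fun_prop

theorem norm_conf_sq_of_det_eq_one {A : M2} (h : A.det = 1) :
    ‖conf A‖ ^ 2 = (1 / 2 * mip A A + 1) / 2 := by
  rw [det_eq_norm_sq_sub_norm_sq] at h; rw [mip_self_eq_norm_sq]; linarith

theorem norm_aconf_sq_of_det_eq_one {A : M2} (h : A.det = 1) :
    ‖aconf A‖ ^ 2 = (1 / 2 * mip A A - 1) / 2 := by
  rw [det_eq_norm_sq_sub_norm_sq] at h; rw [mip_self_eq_norm_sq]; linarith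

theorem mip_self_pos {A : M2} (h : A.det = 1) : 0 < mip A A := by
  nlinarith [norm_aconf_sq_of_det_eq_one h, sq_nonneg ‖aconf A‖]

theorem mip_self_nonneg (A : M2) : 0 ≤ mip A A := by
  rw [mip_self_eq_norm_sq]; positivity

theorem Um_mul_Um_neg_mul_mul_Um_neg_mul_Um (a b : ℝ) (X : M2) :
    Um a * (Um (-a) * X * Um (-b)) * Um b = X := by
  refine eq_of_conf_eq_of_aconf_eq ?_ ?_
  · rw [conf_Um_mul_mul_Um, conf_Um_mul_mul_Um, ← mul_assoc, ← exp_add]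
    push_cast
    ring_nf
    simp
  · rw [aconf_Um_mul_mul_Um, aconf_Um_mul_mul_Um, ← mul_assoc, ← exp_add]
    push_cast
    ring_nf
    simp

theorem periodic_Um_mul_mul_Um {A : ℝ → M2} {ω₁ ω₂ P : ℝ}
    (h₁ : ∀ t, conf (A (t + P)) = exp (↑(ω₁ * P) * I) * conf (A t))
    (h₂ : ∀ t, aconf (A (t + P)) = exp (↑(ω₂ * P) * I) * aconf (A t)) :
    Periodic (fun t => Um (-((ω₁ + ω₂) * t / 2)) * A t * Um (-((ω₁ - ω₂) * t / 2))) P := by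
  intro t
  refine eq_of_conf_eq_of_aconf_eq ?_ ?_
  · rw [conf_Um_mul_mul_Um, conf_Um_mul_mul_Um, h₁, ← mul_assoc, ← exp_add]
    congr 2
    push_cast
    ring
  · rw [aconf_Um_mul_mul_Um, aconf_Um_mul_mul_Um, h₂, ← mul_assoc, ← exp_add]
    congr 2
    push_cast
    ring

def IsSolution (κ : ℝ) (A : ℝ → M2) : Prop :=
  ContDiff ℝ 2 A ∧ ∀ t, deriv (deriv A) t + κ • A t = Lam κ (A t) (deriv A t) • cofm (A t)

namespace IsSolution

variable {κ : ℝ} {A : ℝ → M2} {T : ℝ}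

theorem hasDerivAt (hA : IsSolution κ A) (t : ℝ) : HasDerivAt A (deriv A t) t :=
  (hA.1.differentiable two_ne_zero t).hasDerivAt

theorem hasDerivAt_conf (hA : IsSolution κ A) (t : ℝ) :
    HasDerivAt (fun s => conf (A s)) (conf (deriv A t)) t :=
  conf.hasFDerivAt.comp_hasDerivAt t (hA.hasDerivAt t)

theorem hasDerivAt_aconf (hA : IsSolution κ A) (t : ℝ) :
    HasDerivAt (fun s => aconf (A s)) (aconf (deriv A t)) t :=
  aconf.hasFDerivAt.comp_hasDerivAt t (hA.hasDerivAt t)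

theorem hasDerivAt_conf_deriv (hA : IsSolution κ A) (t : ℝ) :
    HasDerivAt (fun s => conf (deriv A s)) ((Lam κ (A t) (deriv A t) - κ) • conf (A t)) t := by
  have h := congrArg conf (hA.2 t)
  rw [map_add, map_smul, map_smul, conf_cofm] at h
  rw [sub_smul, ← h, add_sub_cancel_right]
  exact conf.hasFDerivAt.comp_hasDerivAt t (hA.1.differentiable_deriv_two t).hasDerivAt

theorem hasDerivAt_aconf_deriv (hA : IsSolution κ A) (t : ℝ) :
    HasDerivAt (fun s => aconf (deriv A s)) (-(Lam κ (A t) (deriv A t) + κ) • aconf (A t)) t := by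
  have h := congrArg aconf (hA.2 t)
  rw [map_add, map_smul, map_smul, aconf_cofm] at h
  rw [show -(Lam κ (A t) (deriv A t) + κ) • aconf (A t) = aconf (deriv (deriv A) t) by
    linear_combination (norm := module) -h]
  exact aconf.hasFDerivAt.comp_hasDerivAt t (hA.1.differentiable_deriv_two t).hasDerivAt

theorem continuous_lam (hA : IsSolution κ A) (hne : ∀ t, mip (A t) (A t) ≠ 0) :
    Continuous fun t => Lam κ (A t) (deriv A t) := by
  unfold Lam
  exact (continuous_const.mul (continuous_const.sub
    (hA.1.continuous_deriv one_le_two).matrix_det)).div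
    (continuous_mip_self.comp hA.1.continuous) hne

theorem det_eq_one_and_mip_cofm_eq_zero (hA : IsSolution κ A) {t₀ : ℝ} (h₀ : (A t₀).det = 1)
    (h₀' : mip (deriv A t₀) (cofm (A t₀)) = 0) (t : ℝ) :
    (A t).det = 1 ∧ mip (deriv A t) (cofm (A t)) = 0 := by
  set f : ℝ → ℝ × ℝ := fun t => ((A t).det - 1, mip (deriv A t) (cofm (A t))) with hfdef
  let L : ℝ × ℝ →L[ℝ] ℝ × ℝ :=
    (ContinuousLinearMap.snd ℝ ℝ ℝ).prod (-(2 * κ) • ContinuousLinearMap.fst ℝ ℝ ℝ)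
  -- `Λ` is the genuine multiplier only where `A ≠ 0`, so `f` solves the linear equation
  -- `f' = L f` only near its zeros; connectedness of `ℝ` does the rest.
  have hf : ∀ s, mip (A s) (A s) ≠ 0 → HasDerivAt f (L (f s)) s := fun s hs => by
    have hΛ := lam_mul_mip (κ := κ) (deriv A s) hs
    rw [mip_self_eq_norm_sq, det_eq_norm_sq_sub_norm_sq] at hΛ
    have e : f = fun t => (‖conf (A t)‖ ^ 2 - ‖aconf (A t)‖ ^ 2 - 1,
        2 * (⟪conf (A t), conf (deriv A t)⟫ - ⟪aconf (A t), aconf (deriv A t)⟫)) := by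
      funext t; simp only [hfdef, det_eq_norm_sq_sub_norm_sq, mip_cofm_eq_inner]
    rw [e]
    refine (((hA.hasDerivAt_conf s).norm_sq.sub (hA.hasDerivAt_aconf s).norm_sq).sub_const 1
      |>.prodMk ((((hA.hasDerivAt_conf s).inner ℝ (hA.hasDerivAt_conf_deriv s)).sub
        ((hA.hasDerivAt_aconf s).inner ℝ (hA.hasDerivAt_aconf_deriv s))).const_mul 2))
      |>.congr_deriv ?_
    refine Prod.ext ?_ ?_
    · simp only [L, ContinuousLinearMap.prod_apply, ContinuousLinearMap.coe_snd']
      ring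
    · simp only [L, ContinuousLinearMap.prod_apply, FunLike.coe_smul, Pi.smul_apply,
        ContinuousLinearMap.coe_fst', smul_eq_mul, real_inner_smul_right,
        real_inner_self_eq_norm_sq]
      linear_combination hΛ
  have hfc : Continuous f := by
    have := hA.1.continuous
    have := hA.1.continuous_deriv one_le_two
    simp only [hfdef, mip, cofm]
    fun_prop
  have hzero := eq_of_forall_eventuallyEq hfc continuous_const (fun s hs =>
    eventuallyEq_zero_of_hasDerivAt_clm_apply continuousAt_const
      (((continuous_mip_self.comp hA.1.continuous).continuousAt.eventually_ne
        (mip_self_pos (sub_eq_zero.1 (congrArg Prod.fst hs))).ne').mono hf) hs)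
    (t₀ := t₀) (Prod.ext (sub_eq_zero.2 h₀) h₀')
  obtain ⟨h₁, h₂⟩ := Prod.ext_iff.1 (congrFun hzero t)
  exact ⟨sub_eq_zero.1 h₁, h₂⟩

theorem X3_const (hA : IsSolution κ A) (s t : ℝ) :
    X3 (A t) (deriv A t) = X3 (A s) (deriv A s) := by
  simp only [X3_eq_im, im_conj_mul_eq_of_hasDerivAt_smul hA.hasDerivAt_conf
    hA.hasDerivAt_conf_deriv s t]

theorem X2_const (hA : IsSolution κ A) (s t : ℝ) :
    X2 (A t) (deriv A t) = X2 (A s) (deriv A s) := by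
  simp only [X2_eq_im, im_conj_mul_eq_of_hasDerivAt_smul hA.hasDerivAt_aconf
    hA.hasDerivAt_aconf_deriv s t]

theorem sub_det_deriv_mul_mip_self_const (hA : IsSolution κ A) (hdet : ∀ t, (A t).det = 1)
    (htan : ∀ t, mip (deriv A t) (cofm (A t)) = 0) (s t : ℝ) :
    (κ - (deriv A t).det) * mip (A t) (A t) = (κ - (deriv A s).det) * mip (A s) (A s) := by
  have h : ∀ t, HasDerivAt (fun t => (κ - (deriv A t).det) * mip (A t) (A t)) 0 t := fun t => by
    have hΛ := lam_mul_mip (κ := κ) (deriv A t) (mip_self_pos (hdet t)).ne'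
    have htan' := htan t
    rw [mip_self_eq_norm_sq, det_eq_norm_sq_sub_norm_sq] at hΛ
    rw [mip_cofm_eq_inner] at htan'
    simp only [det_eq_norm_sq_sub_norm_sq, mip_self_eq_norm_sq]
    refine ((hA.hasDerivAt_conf_deriv t).norm_sq.sub (hA.hasDerivAt_aconf_deriv t).norm_sq
      |>.const_sub κ
      |>.mul (((hA.hasDerivAt_conf t).norm_sq.add (hA.hasDerivAt_aconf t).norm_sq).const_mul 2))
      |>.congr_deriv ?_
    simp only [Pi.add_apply, Pi.sub_apply, real_inner_smul_right,
      real_inner_comm (conf (A t)) (conf (deriv A t)),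
      real_inner_comm (aconf (A t)) (aconf (deriv A t))]
    linear_combination
      (-2 * (⟪conf (A t), conf (deriv A t)⟫ + ⟪aconf (A t), aconf (deriv A t)⟫)) * hΛ
        + 2 * κ * (‖conf (A t)‖ ^ 2 + ‖aconf (A t)‖ ^ 2) * htan'
  exact is_const_of_deriv_eq_zero (fun t => (h t).differentiableAt) (fun t => (h t).deriv) t s

theorem periodic_lam (hA : IsSolution κ A) (hdet : ∀ t, (A t).det = 1)
    (htan : ∀ t, mip (deriv A t) (cofm (A t)) = 0)
    (hper : Periodic (fun t => mip (A t) (A t)) T) :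
    Periodic (fun t => Lam κ (A t) (deriv A t)) T := by
  have h : ∀ t, Lam κ (A t) (deriv A t)
      = 2 * ((κ - (deriv A 0).det) * mip (A 0) (A 0)) / mip (A t) (A t) ^ 2 := fun t => by
    rw [← hA.sub_det_deriv_mul_mip_self_const hdet htan 0 t, Lam]
    field_simp [(mip_self_pos (hdet t)).ne']
  intro t
  simp only [h, hper t]

theorem conf_add_period (hA : IsSolution κ A) (hdet : ∀ t, (A t).det = 1)
    (hper : Periodic (fun t => mip (A t) (A t)) T) (t : ℝ) :
    conf (A (t + T)) = exp (↑(∫ s in (0 : ℝ)..T,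
      X3 (A 0) (deriv A 0) / (1 / 2 * mip (A s) (A s) + 1)) * I) * conf (A t) := by
  have hnorm := fun s => norm_conf_sq_of_det_eq_one (hdet s)
  have hne : ∀ s, conf (A s) ≠ 0 := fun s h0 => by
    have := hnorm s
    rw [h0, norm_zero] at this
    linarith [mip_self_nonneg (A s)]
  rw [apply_add_eq_exp_integral_mul hA.hasDerivAt_conf hne (fun s => by simp only [hnorm, hper s])
    (L := X3 (A 0) (deriv A 0) / 2) (fun s => by rw [← hA.X3_const 0 s, X3_eq_im]; ring) t]
  congr 4
  refine intervalIntegral.integral_congr fun s _ => ?_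
  simp only [hnorm]
  rw [div_div_div_cancel_right₀ (two_ne_zero' ℝ)]

theorem aconf_add_period (hA : IsSolution κ A) (hdet : ∀ t, (A t).det = 1)
    (hper : Periodic (fun t => mip (A t) (A t)) T) (hX2 : X2 (A 0) (deriv A 0) ≠ 0) (t : ℝ) :
    aconf (A (t + T)) = exp (↑(∫ s in (0 : ℝ)..T,
      X2 (A 0) (deriv A 0) / (1 / 2 * mip (A s) (A s) - 1)) * I) * aconf (A t) := by
  have hnorm := fun s => norm_aconf_sq_of_det_eq_one (hdet s)
  have hne : ∀ s, aconf (A s) ≠ 0 := fun s h0 => hX2 (by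
    rw [← hA.X2_const 0 s, X2_eq_im, h0]; simp)
  rw [apply_add_eq_exp_integral_mul hA.hasDerivAt_aconf hne (fun s => by simp only [hnorm, hper s])
    (L := X2 (A 0) (deriv A 0) / 2) (fun s => by rw [← hA.X2_const 0 s, X2_eq_im]; ring) t]
  congr 4
  refine intervalIntegral.integral_congr fun s _ => ?_
  simp only [hnorm]
  rw [div_div_div_cancel_right₀ (two_ne_zero' ℝ)]

theorem periodic_aconf (hA : IsSolution κ A) (hdet : ∀ t, (A t).det = 1)
    (htan : ∀ t, mip (deriv A t) (cofm (A t)) = 0)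
    (hper : Periodic (fun t => mip (A t) (A t)) T) (hX2 : X2 (A 0) (deriv A 0) = 0) :
    Periodic (fun t => aconf (A t)) (2 * T) ∧
      ((∀ t, aconf (A t) ≠ 0) → Periodic (fun t => aconf (A t)) T) :=
  periodic_of_im_conj_mul_eq_zero (c := fun t => -(Lam κ (A t) (deriv A t) + κ))
    ((hA.continuous_lam fun t => (mip_self_pos (hdet t)).ne').add continuous_const).neg
    (fun t => by simp only [hA.periodic_lam hdet htan hper t]) hA.hasDerivAt_aconf
    hA.hasDerivAt_aconf_deriv
    (fun t => by linarith [hA.X2_const 0 t, X2_eq_im (A t) (deriv A t)])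
    (fun t => by simp only [norm_aconf_sq_of_det_eq_one (hdet _), hper t])

end IsSolution

theorem quasi_periodic_general (κ : ℝ) (A₀ B₀ : M2)
    (hdet : A₀.det = 1) (htan : mip B₀ (cofm A₀) = 0)
    (A : ℝ → M2) (hA : ContDiff ℝ 2 A)
    (hA0 : A 0 = A₀) (hB0 : deriv A 0 = B₀)
    (hode : ∀ t : ℝ, deriv (deriv A) t + κ • A t
      = Lam κ (A t) (deriv A t) • cofm (A t))
    (T : ℝ) (hT : 0 < T)
    (hper : Function.Periodic (fun t => fnorm (A t)) T)
    (ω₁ ω₂ : ℝ)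
    (hω₁ : ω₁ = (1/T) * ∫ t in (0:ℝ)..T, X3 A₀ B₀ / ((1/2) * mip (A t) (A t) + 1))
    (hω₂0 : X2 A₀ B₀ = 0 → ω₂ = 0)
    (hω₂1 : X2 A₀ B₀ ≠ 0 →
      ω₂ = (1/T) * ∫ t in (0:ℝ)..T, X2 A₀ B₀ / ((1/2) * mip (A t) (A t) - 1)) :
    ∃ Ahat : ℝ → M2, Function.Periodic Ahat (2 * T) ∧
      (∀ t : ℝ, A t = Um ((ω₁ + ω₂) * t / 2) * Ahat t * Um ((ω₁ - ω₂) * t / 2)) ∧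
      ((∀ t : ℝ, ¬ isSO (A t)) → Function.Periodic Ahat T) := by
  subst hA0 hB0
  have hsol : IsSolution κ A := ⟨hA, hode⟩
  have hD := hsol.det_eq_one_and_mip_cofm_eq_zero hdet htan
  have hmip : Periodic (fun t => mip (A t) (A t)) T := fun t =>
    (Real.sqrt_inj (mip_self_nonneg _) (mip_self_nonneg _)).1 (hper t)
  have h₁ : ∀ t, conf (A (t + T)) = exp (↑(ω₁ * T) * I) * conf (A t) := by
    have hω : ω₁ * T = ∫ t in (0:ℝ)..T, X3 (A 0) (deriv A 0) / (1 / 2 * mip (A t) (A t) + 1) := by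
      rw [hω₁]; field_simp
    simpa only [hω] using hsol.conf_add_period (fun t => (hD t).1) hmip
  have h₂ : (∀ t, aconf (A (t + 2 * T)) = exp (↑(ω₂ * (2 * T)) * I) * aconf (A t)) ∧
      ((∀ t, aconf (A t) ≠ 0) → ∀ t, aconf (A (t + T)) = exp (↑(ω₂ * T) * I) * aconf (A t)) := by
    by_cases hX2 : X2 (A 0) (deriv A 0) = 0
    · simpa [hω₂0 hX2] using
        hsol.periodic_aconf (fun t => (hD t).1) (fun t => (hD t).2) hmip hX2
    · have hω : ω₂ * T
          = ∫ t in (0:ℝ)..T, X2 (A 0) (deriv A 0) / (1 / 2 * mip (A t) (A t) - 1) := by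
        rw [hω₂1 hX2]; field_simp
      have h := hsol.aconf_add_period (fun t => (hD t).1) hmip hX2
      rw [← hω] at h
      exact ⟨apply_add_two_mul_eq_exp_mul (z := fun t => aconf (A t)) h, fun _ => h⟩
  refine ⟨fun t => Um (-((ω₁ + ω₂) * t / 2)) * A t * Um (-((ω₁ - ω₂) * t / 2)),
    periodic_Um_mul_mul_Um (apply_add_two_mul_eq_exp_mul (z := fun t => conf (A t)) h₁) h₂.1,
    fun t => (Um_mul_Um_neg_mul_mul_Um_neg_mul_Um _ _ _).symm, fun hSO => ?_⟩
  exact periodic_Um_mul_mul_Um h₁ (h₂.2 fun t h0 =>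
    hSO t (isSO_of_det_eq_one_of_aconf_eq_zero (hD t).1 h0))

/-- quasi-periodic structure of solutions with |A(t)| nonconstant
and T-periodic. -/
theorem quasi_periodic (κ : ℝ) (hκ : 0 ≤ κ) (A₀ B₀ : M2)
    (hdet : A₀.det = 1) (htan : mip B₀ (cofm A₀) = 0)
    (A : ℝ → M2) (hA : ContDiff ℝ 2 A)
    (hA0 : A 0 = A₀) (hB0 : deriv A 0 = B₀)
    (hode : ∀ t : ℝ, deriv (deriv A) t + κ • A t
      = Lam κ (A t) (deriv A t) • cofm (A t))
    (T : ℝ) (hT : 0 < T)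
    (hper : Function.Periodic (fun t => fnorm (A t)) T)
    (hnonconst : ∃ s t : ℝ, fnorm (A s) ≠ fnorm (A t))
    (ω₁ ω₂ : ℝ)
    (hω₁ : ω₁ = (1/T) * ∫ t in (0:ℝ)..T, X3 A₀ B₀ / ((1/2) * mip (A t) (A t) + 1))
    (hω₂0 : X2 A₀ B₀ = 0 → ω₂ = 0)
    (hω₂1 : X2 A₀ B₀ ≠ 0 →
      ω₂ = (1/T) * ∫ t in (0:ℝ)..T, X2 A₀ B₀ / ((1/2) * mip (A t) (A t) - 1)) :
    ∃ Ahat : ℝ → M2, Function.Periodic Ahat (2 * T) ∧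
      (∀ t : ℝ, A t = Um ((ω₁ + ω₂) * t / 2) * Ahat t * Um ((ω₁ - ω₂) * t / 2)) ∧
      ((∀ t : ℝ, ¬ isSO (A t)) → Function.Periodic Ahat T) :=
  quasi_periodic_general κ A₀ B₀ hdet htan A hA hA0 hB0 hode T hT hper ω₁ ω₂ hω₁ hω₂0 hω₂1
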